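/- Let 0 < λ ≤ Λ, let 1 ≤ p ≤ n be an integer, let δ > 0 and b ≥ 0 satisfy bδ < λp, and let Ω ⊆ B_δ = {|x| < δ} be a bounded domain of ℝⁿ. If u ∈ USC(Ω) is a viscosity subsolution of P⁺_{λ,Λ|p}(D²u) + b|Du| = f(x) in Ω with f : Ω → ℝ continuous, then sup_Ω u ≤ limsup_{y→∂Ω} u(y) + C·‖f⁻‖_∞ with C = δ²/(2(λp − bδ)). -/

import Mathlib

open MeasureTheory Metric Filter
open scoped ENNReal

noncomputable section

/-- Matrix (in the standard basis) of the orthogonal projection of `ℝⁿ` onto a subspace `W`. -/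
noncomputable def projMatrix {n : ℕ} (W : Submodule ℝ (EuclideanSpace ℝ (Fin n))) :
    Matrix (Fin n) (Fin n) ℝ :=
  LinearMap.toMatrix (EuclideanSpace.basisFun (Fin n) ℝ).toBasis
    (EuclideanSpace.basisFun (Fin n) ℝ).toBasis
    (W.subtype ∘ₗ (W.orthogonalProjection).toLinearMap)

/-- `X_W = P_W X P_W`, the compression of `X` to the subspace `W`. -/
noncomputable def restrictW {n : ℕ} (W : Submodule ℝ (EuclideanSpace ℝ (Fin n)))
    (X : Matrix (Fin n) (Fin n) ℝ) : Matrix (Fin n) (Fin n) ℝ :=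
  projMatrix W * X * projMatrix W

/-- `Tr(A⁺)`, i.e. the sum of the positive parts of the eigenvalues of a symmetric matrix `A`,
where `A = A⁺ - A⁻` is the unique decomposition with `A⁺, A⁻` positive semidefinite and
`A⁺ A⁻ = 0`. -/
noncomputable def posTrace {n : ℕ} (A : Matrix (Fin n) (Fin n) ℝ) : ℝ :=
  if h : A.IsHermitian then ∑ i, max (h.eigenvalues i) 0 else 0

/-- `Tr(A⁻)`, the sum of the negative parts of the eigenvalues of a symmetric matrix `A`. -/
noncomputable def negTrace {n : ℕ} (A : Matrix (Fin n) (Fin n) ℝ) : ℝ :=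
  if h : A.IsHermitian then ∑ i, max (-h.eigenvalues i) 0 else 0

/-- The restricted Pucci maximal operator `P⁺_{λ,Λ|W}(X) = Λ·Tr(X_W⁺) − λ·Tr(X_W⁻)`. -/
noncomputable def pucciSupW {n : ℕ} (lam Lam : ℝ) (W : Submodule ℝ (EuclideanSpace ℝ (Fin n)))
    (X : Matrix (Fin n) (Fin n) ℝ) : ℝ :=
  Lam * posTrace (restrictW W X) - lam * negTrace (restrictW W X)

/-- The restricted Pucci minimal operator `P⁻_{λ,Λ|W}(X) = λ·Tr(X_W⁺) − Λ·Tr(X_W⁻)`. -/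
noncomputable def pucciInfW {n : ℕ} (lam Lam : ℝ) (W : Submodule ℝ (EuclideanSpace ℝ (Fin n)))
    (X : Matrix (Fin n) (Fin n) ℝ) : ℝ :=
  lam * posTrace (restrictW W X) - Lam * negTrace (restrictW W X)

/-- The eigenvalues of a symmetric matrix arranged in increasing order, `0`-based:
`sortedEig X 0 = e_1(X) ≤ … ≤ sortedEig X (n-1) = e_n(X)`. -/
noncomputable def sortedEig {n : ℕ} (X : Matrix (Fin n) (Fin n) ℝ) : Fin n → ℝ :=
  if h : X.IsHermitian then h.eigenvalues ∘ (Tuple.sort h.eigenvalues) else 0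

/-- The degenerate Pucci maximal operator of order `p`:
`P⁺_{λ,Λ|p}(X) = Σ_{i=n−p+1}^n (Λ·e_i(X)⁺ − λ·e_i(X)⁻)` (sum over the `p` largest
eigenvalues). -/
noncomputable def pucciSupP {n : ℕ} (lam Lam : ℝ) (p : ℕ)
    (X : Matrix (Fin n) (Fin n) ℝ) : ℝ :=
  ∑ i ∈ Finset.univ.filter (fun i : Fin n => n - p ≤ (i : ℕ)),
    (Lam * max (sortedEig X i) 0 - lam * max (-(sortedEig X i)) 0)

/-- The degenerate Pucci minimal operator of order `p`:
`P⁻_{λ,Λ|p}(X) = Σ_{i=1}^p (λ·e_i(X)⁺ − Λ·e_i(X)⁻)` (sum over the `p` smallest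
eigenvalues). -/
noncomputable def pucciInfP {n : ℕ} (lam Lam : ℝ) (p : ℕ)
    (X : Matrix (Fin n) (Fin n) ℝ) : ℝ :=
  ∑ i ∈ Finset.univ.filter (fun i : Fin n => (i : ℕ) < p),
    (lam * max (sortedEig X i) 0 - Lam * max (-(sortedEig X i)) 0)

/-- The Hessian matrix `D²φ(x)` of a real valued function on `ℝⁿ`. -/
noncomputable def hessianMatrix {n : ℕ} (φ : EuclideanSpace ℝ (Fin n) → ℝ)
    (x : EuclideanSpace ℝ (Fin n)) : Matrix (Fin n) (Fin n) ℝ :=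
  fun i j => iteratedFDeriv ℝ 2 φ x ![EuclideanSpace.single i 1, EuclideanSpace.single j 1]

/-- `u` is a viscosity subsolution of `G(u, Du, D²u) = f(x)` in `Ω`. -/
def IsViscositySubsolution {n : ℕ} (Ω : Set (EuclideanSpace ℝ (Fin n)))
    (G : ℝ → EuclideanSpace ℝ (Fin n) → Matrix (Fin n) (Fin n) ℝ → ℝ)
    (u f : EuclideanSpace ℝ (Fin n) → ℝ) : Prop :=
  ∀ x₀ ∈ Ω, ∀ φ : EuclideanSpace ℝ (Fin n) → ℝ, ContDiff ℝ 2 φ →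
    IsLocalMaxOn (fun x => u x - φ x) Ω x₀ →
    f x₀ ≤ G (u x₀) (gradient φ x₀) (hessianMatrix φ x₀)

/-- `v` is a viscosity supersolution of `G(v, Dv, D²v) = f(x)` in `Ω`. -/
def IsViscositySupersolution {n : ℕ} (Ω : Set (EuclideanSpace ℝ (Fin n)))
    (G : ℝ → EuclideanSpace ℝ (Fin n) → Matrix (Fin n) (Fin n) ℝ → ℝ)
    (v f : EuclideanSpace ℝ (Fin n) → ℝ) : Prop :=
  ∀ x₀ ∈ Ω, ∀ φ : EuclideanSpace ℝ (Fin n) → ℝ, ContDiff ℝ 2 φ →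
    IsLocalMinOn (fun x => v x - φ x) Ω x₀ →
    G (v x₀) (gradient φ x₀) (hessianMatrix φ x₀) ≤ f x₀

-- The `α`-Riesz kernel (for sets contained in `B_d`), with value `∞` at the origin:
-- `Φ_α(x) = |x|^{−α}` for `α > 0` and `Φ_0(x) = log(2d/|x|)`.
open Classical in
noncomputable def rieszKernel {n : ℕ} (α d : ℝ) (x : EuclideanSpace ℝ (Fin n)) : ℝ≥0∞ :=
  if x = 0 then ⊤
  else ENNReal.ofReal (if α = 0 then Real.log (2 * d / ‖x‖) else ‖x‖ ^ (-α))

/-- The real valued `α`-Riesz kernel (for sets contained in `B_d`):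
`Φ_α(x) = |x|^{−α}` for `α > 0` and `Φ_0(x) = log(2d/|x|)`. -/
noncomputable def rieszKernelR {n : ℕ} (α d : ℝ) (x : EuclideanSpace ℝ (Fin n)) : ℝ :=
  if α = 0 then Real.log (2 * d / ‖x‖) else ‖x‖ ^ (-α)

/-- A set `E ⊆ ℝⁿ` has zero `α`-Riesz capacity: every Borel probability measure supported
on a compact subset of `E` has infinite `α`-energy. -/
def HasZeroRieszCapacity {n : ℕ} (α : ℝ) (E : Set (EuclideanSpace ℝ (Fin n))) : Prop :=
  ∀ K ⊆ E, IsCompact K → ∀ d > 0, K ⊆ ball (0 : EuclideanSpace ℝ (Fin n)) d →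
    ∀ μ : Measure (EuclideanSpace ℝ (Fin n)), IsProbabilityMeasure μ → μ Kᶜ = 0 →
      ∫⁻ x, ∫⁻ y, rieszKernel α d (x - y) ∂μ ∂μ = ⊤

/-! Compare `u` with the concave paraboloid `φ z = a - c‖z‖²`, where `c = (K + ε) / (2(λp - bδ))`
and `a = M + ε + cδ²`, so that `φ ≥ M + ε` on `Ω ⊆ B_δ`. As `D²φ = -2c·I` and `|Dφ| ≤ 2cδ`,
`P⁺_{λ,Λ|p}(D²φ) + b|Dφ| ≤ -2c(λp - bδ) = -(K + ε) < f`, so `φ` is a strict supersolution.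
If `u > φ` somewhere, then `u - φ`, being `≤ 0` near `∂Ω`, attains a positive maximum inside `Ω`,
and the subsolution test at that point contradicts the strict inequality. Let `ε → 0`. -/

open Topology

theorem UpperSemicontinuousOn.exists_isMaxOn_of_frontier_le {α β : Type*} [TopologicalSpace α]
    [LinearOrder β] {Ω : Set α} {v : α → β} {m : β} {y : α} (hΩ : IsOpen Ω)
    (hΩc : IsCompact (closure Ω)) (hv : UpperSemicontinuousOn v Ω)
    (hfr : ∀ x ∈ frontier Ω, ∀ᶠ z in 𝓝[Ω] x, v z ≤ m) (hy : y ∈ Ω) (hvy : m < v y) :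
    ∃ x ∈ Ω, IsMaxOn v Ω x := by
  set T := {z ∈ Ω | v y ≤ v z}
  have hT : T ⊆ Ω := Set.sep_subset _ _
  have hyT : y ∈ T := ⟨hy, le_rfl⟩
  have hTΩ : closure T ⊆ Ω := by
    intro z hz
    by_contra hzΩ
    have hzfr : z ∈ frontier Ω := by
      rw [hΩ.frontier_eq]
      exact ⟨closure_mono hT hz, hzΩ⟩
    have : (𝓝[T] z).NeBot := mem_closure_iff_nhdsWithin_neBot.1 hz
    obtain ⟨w, hwm, hwT⟩ :=
      ((hfr z hzfr).filter_mono (nhdsWithin_mono z hT)).and self_mem_nhdsWithin |>.exists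
    exact (hvy.trans_le hwT.2).not_ge hwm
  obtain ⟨x, hxT, hxmax⟩ := (hv.mono hTΩ).exists_isMaxOn ⟨y, subset_closure hyT⟩
    (hΩc.of_isClosed_subset isClosed_closure (closure_mono hT))
  refine ⟨x, hTΩ hxT, fun z hz => ?_⟩
  by_cases hyz : v y ≤ v z
  · exact hxmax (subset_closure ⟨hz, hyz⟩)
  · exact (not_le.1 hyz).le.trans (hxmax (subset_closure hyT))

def paraboloid {F : Type*} [NormedAddCommGroup F] (a c : ℝ) (z : F) : ℝ := a - c * ‖z‖ ^ 2

section Paraboloid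

variable {F : Type*} [NormedAddCommGroup F] [InnerProductSpace ℝ F] (a c : ℝ)

theorem contDiff_paraboloid {k : WithTop ℕ∞} : ContDiff ℝ k (paraboloid (F := F) a c) :=
  contDiff_const.sub (contDiff_const.mul (contDiff_norm_sq ℝ))

theorem hasFDerivAt_paraboloid (x : F) :
    HasFDerivAt (paraboloid a c) ((-2 * c) • innerSL ℝ x) x := by
  refine ((hasFDerivAt_const a x).sub
    ((hasStrictFDerivAt_norm_sq x).hasFDerivAt.const_mul c)).congr_fderiv ?_
  ext y
  simp only [zero_sub, neg_apply, smul_apply, coe_innerSL_apply, nsmul_eq_mul, Nat.cast_ofNat,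
    smul_eq_mul, neg_mul]
  ring

theorem fderiv_paraboloid : fderiv ℝ (paraboloid (F := F) a c) = (-2 * c) • innerSL ℝ :=
  funext fun x => (hasFDerivAt_paraboloid a c x).fderiv

theorem gradient_paraboloid [CompleteSpace F] (x : F) :
    gradient (paraboloid a c) x = (-2 * c) • x := by
  rw [gradient, fderiv_paraboloid, LinearIsometryEquiv.symm_apply_eq]
  ext y
  simp

end Paraboloid

theorem hessianMatrix_paraboloid {n : ℕ} (a c : ℝ) (x : EuclideanSpace ℝ (Fin n)) :
    hessianMatrix (paraboloid a c) x = (-2 * c) • (1 : Matrix (Fin n) (Fin n) ℝ) := by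
  ext i j
  rw [hessianMatrix, iteratedFDeriv_two_apply, fderiv_paraboloid,
    ((-2 * c) • innerSL ℝ).fderiv]
  simp only [Matrix.cons_val_zero, Matrix.cons_val_one, Matrix.cons_val_fin_one, smul_apply,
    smul_eq_mul, Matrix.smul_apply]
  rw [innerSL_apply_apply, EuclideanSpace.inner_single_left]
  simp [Matrix.one_apply]

theorem Matrix.IsHermitian.eigenvalues_smul_one {ι : Type*} [Fintype ι] [DecidableEq ι] {r : ℝ}
    (h : (r • 1 : Matrix ι ι ℝ).IsHermitian) (i : ι) : h.eigenvalues i = r := by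
  have : Nonempty ι := ⟨i⟩
  simpa [← Algebra.algebraMap_eq_smul_one, spectrum.scalar_eq] using
    h.eigenvalues_mem_spectrum_real i

theorem sortedEig_smul_one {n : ℕ} (r : ℝ) (i : Fin n) :
    sortedEig (r • 1 : Matrix (Fin n) (Fin n) ℝ) i = r := by
  have h : (r • 1 : Matrix (Fin n) (Fin n) ℝ).IsHermitian := by
    simp [Matrix.IsHermitian]
  rw [sortedEig, dif_pos h]
  exact h.eigenvalues_smul_one _

theorem card_filter_sub_le_val {n p : ℕ} (hpn : p ≤ n) :
    (Finset.univ.filter fun i : Fin n => n - p ≤ (i : ℕ)).card = p := by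
  have h := Finset.card_filter_add_card_filter_not (s := Finset.univ)
    (fun i : Fin n => (i : ℕ) < n - p)
  simp only [Fin.card_filter_val_lt, not_lt, Finset.card_univ, Fintype.card_fin] at h
  omega

theorem pucciSupP_smul_one {n p : ℕ} (lam Lam : ℝ) (hpn : p ≤ n) {r : ℝ} (hr : r ≤ 0) :
    pucciSupP lam Lam p (r • 1 : Matrix (Fin n) (Fin n) ℝ) = p * lam * r := by
  have hterm : ∀ i : Fin n, Lam * max (sortedEig (r • 1 : Matrix (Fin n) (Fin n) ℝ) i) 0
      - lam * max (-sortedEig (r • 1 : Matrix (Fin n) (Fin n) ℝ) i) 0 = lam * r := by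
    intro i
    rw [sortedEig_smul_one, max_eq_right hr, max_eq_left (neg_nonneg.2 hr)]
    ring
  simp only [pucciSupP, hterm, Finset.sum_const, card_filter_sub_le_val hpn, nsmul_eq_mul]
  ring

theorem pucciSupP_hessian_paraboloid_add_drift_le {n p : ℕ} (lam Lam : ℝ) {b c δ : ℝ} (a : ℝ)
    (hpn : p ≤ n) (hb : 0 ≤ b) (hc : 0 ≤ c) {x : EuclideanSpace ℝ (Fin n)} (hx : ‖x‖ ≤ δ) :
    pucciSupP lam Lam p (hessianMatrix (paraboloid a c) x) + b * ‖gradient (paraboloid a c) x‖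
      ≤ -(2 * c * (lam * p - b * δ)) := by
  rw [hessianMatrix_paraboloid, gradient_paraboloid, pucciSupP_smul_one lam Lam hpn (by linarith),
    norm_smul, Real.norm_eq_abs, abs_of_nonpos (by linarith)]
  nlinarith [mul_le_mul_of_nonneg_left hx (mul_nonneg hb hc)]

theorem maximum_principle_small_drift_eps {n p : ℕ} {lam Lam δ b : ℝ} (hpn : p ≤ n)
    (hb : 0 ≤ b) (hbδ : b * δ < lam * p) {Ω : Set (EuclideanSpace ℝ (Fin n))} (hΩo : IsOpen Ω)
    (hΩsub : Ω ⊆ ball 0 δ) {u f : EuclideanSpace ℝ (Fin n) → ℝ} (hu : UpperSemicontinuousOn u Ω)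
    (hsub : IsViscositySubsolution Ω (fun _ ξ X => pucciSupP lam Lam p X + b * ‖ξ‖) u f)
    {M K ε : ℝ} (hK : 0 ≤ K) (hε : 0 < ε) (hfK : ∀ x ∈ Ω, max (-f x) 0 ≤ K)
    (hM : ∀ x ∈ frontier Ω, ∀ᶠ y in 𝓝[Ω] x, u y ≤ M + ε) {x : EuclideanSpace ℝ (Fin n)}
    (hx : x ∈ Ω) : u x ≤ M + ε + (K + ε) / (2 * (lam * p - b * δ)) * δ ^ 2 := by
  have hgap : 0 < lam * p - b * δ := sub_pos.2 hbδ
  set c := (K + ε) / (2 * (lam * p - b * δ))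
  have hc : 0 ≤ c := div_nonneg (by linarith) (by linarith)
  set φ : EuclideanSpace ℝ (Fin n) → ℝ := paraboloid (M + ε + c * δ ^ 2) c
  have hφ : ∀ z ∈ Ω, M + ε ≤ φ z := fun z hz => by
    have hzδ := mem_ball_zero_iff.1 (hΩsub hz)
    have : ‖z‖ ^ 2 ≤ δ ^ 2 := pow_le_pow_left₀ (norm_nonneg z) hzδ.le 2
    simp only [φ, paraboloid]
    nlinarith
  by_contra! hux
  have hvx : 0 < u x - φ x := by
    simp only [φ, paraboloid]
    nlinarith [norm_nonneg x]
  have hv : UpperSemicontinuousOn (fun z => u z - φ z) Ω :=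
    hu.add (contDiff_paraboloid (k := 0) _ _).continuous.neg.continuousOn.upperSemicontinuousOn
  have hfr : ∀ y ∈ frontier Ω, ∀ᶠ w in 𝓝[Ω] y, u w - φ w ≤ 0 := fun y hy => by
    filter_upwards [hM y hy, self_mem_nhdsWithin] with w hw hwΩ
    linarith [hφ w hwΩ]
  obtain ⟨z, hz, hzmax⟩ := hv.exists_isMaxOn_of_frontier_le hΩo
    (isBounded_ball.subset hΩsub).isCompact_closure hfr hx hvx
  have hfz := hsub z hz φ (contDiff_paraboloid _ _) hzmax.localize
  have hdrift := pucciSupP_hessian_paraboloid_add_drift_le lam Lam (M + ε + c * δ ^ 2) hpn hb hc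
    (mem_ball_zero_iff.1 (hΩsub hz)).le
  have hcgap : 2 * c * (lam * p - b * δ) = K + ε := by
    simp only [c]
    field_simp
  linarith [(le_max_left _ _).trans (hfK z hz)]

theorem maximum_principle_small_drift_general (n : ℕ) (lam Lam : ℝ)
    (p : ℕ) (hpn : p ≤ n)
    (δ b : ℝ) (hb : 0 ≤ b) (hbδ : b * δ < lam * p)
    (Ω : Set (EuclideanSpace ℝ (Fin n))) (hΩo : IsOpen Ω)
    (hΩsub : Ω ⊆ ball (0 : EuclideanSpace ℝ (Fin n)) δ)
    (u f : EuclideanSpace ℝ (Fin n) → ℝ) (hu : UpperSemicontinuousOn u Ω)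
    (hsub : IsViscositySubsolution Ω
      (fun _ ξ X => pucciSupP lam Lam p X + b * ‖ξ‖) u f)
    (M K : ℝ) (hfK : ∀ x ∈ Ω, max (-f x) 0 ≤ K)
    (hM : ∀ x ∈ frontier Ω, ∀ ε > 0, ∀ᶠ y in nhdsWithin x Ω, u y ≤ M + ε) :
    ∀ x ∈ Ω, u x ≤ M + δ ^ 2 / (2 * (lam * p - b * δ)) * K := by
  intro x hx
  have hK : 0 ≤ K := (le_max_right _ _).trans (hfK x hx)
  have key : ∀ ε > 0, u x ≤ M + ε + (K + ε) / (2 * (lam * p - b * δ)) * δ ^ 2 :=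
    fun ε hε => maximum_principle_small_drift_eps hpn hb hbδ hΩo hΩsub hu hsub hK hε hfK
      (fun y hy => hM y hy ε hε) hx
  have hcont : Continuous fun ε => M + ε + (K + ε) / (2 * (lam * p - b * δ)) * δ ^ 2 := by
    fun_prop
  calc u x ≤ M + 0 + (K + 0) / (2 * (lam * p - b * δ)) * δ ^ 2 :=
        ge_of_tendsto (hcont.continuousWithinAt (s := Set.Ioi 0)).tendsto
          (eventually_nhdsWithin_of_forall key)
    _ = M + δ ^ 2 / (2 * (lam * p - b * δ)) * K := by ring

/-- maximum principle for subsolutions of the degenerate maximal equation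
when `bδ < λp`. -/
theorem maximum_principle_small_drift (n : ℕ) (lam Lam : ℝ) (hlam : 0 < lam)
    (hLam : lam ≤ Lam) (p : ℕ) (hp1 : 1 ≤ p) (hpn : p ≤ n)
    (δ b : ℝ) (hδ : 0 < δ) (hb : 0 ≤ b) (hbδ : b * δ < lam * p)
    (Ω : Set (EuclideanSpace ℝ (Fin n))) (hΩo : IsOpen Ω) (hΩconn : IsConnected Ω)
    (hΩsub : Ω ⊆ ball (0 : EuclideanSpace ℝ (Fin n)) δ)
    (u f : EuclideanSpace ℝ (Fin n) → ℝ) (hu : UpperSemicontinuousOn u Ω) (hf : ContinuousOn f Ω)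
    (hsub : IsViscositySubsolution Ω
      (fun _ ξ X => pucciSupP lam Lam p X + b * ‖ξ‖) u f)
    (M K : ℝ) (hK0 : 0 ≤ K) (hfK : ∀ x ∈ Ω, max (-f x) 0 ≤ K)
    (hM : ∀ x ∈ frontier Ω, ∀ ε > 0, ∀ᶠ y in nhdsWithin x Ω, u y ≤ M + ε) :
    ∀ x ∈ Ω, u x ≤ M + δ ^ 2 / (2 * (lam * p - b * δ)) * K :=
  maximum_principle_small_drift_general n lam Lam p hpn δ b hb hbδ Ω hΩo hΩsub u f hu hsub M K hfK
    hM

end
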